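/- arXiv:2210.07368 — 4 statements merged into one kernel-verified Lean document; each statement's English description precedes it below -/
import Mathlib

section
/- Let A be a commutative ring and p, E ∈ A. Assume that A is E-adically complete and separated, i.e., the natural map A → lim_n A/E^n A is bijective, and that for every n ≥ 1 the element p is a nonzerodivisor on A/E^n A. Then A/pA is E-adically complete and separated, i.e., the natural map A/pA → lim_n A/(pA + E^n A) is bijective. -/
/-!
Precompleteness passes to every quotient module, because adic completion preserves surjections.
For separatedness of `A/pA` one shows that `pA` is `E`-adically closed: if `a ≡ p bₙ` modulo
`Eⁿ` for all `n`, then `p (bₘ - bₙ) ∈ Eᵐ` for `m ≤ n`, so regularity of `p` on `A/Eᵐ` makes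
`(bₙ)` Cauchy; its limit `L` satisfies `a ≡ p L` modulo every `Eⁿ`, hence `a = p L`.
-/

open Submodule Pointwise

section

variable {R M M' : Type*} [CommRing R] {I : Ideal R} [AddCommGroup M] [Module R M]
  [AddCommGroup M'] [Module R M']

theorem IsPrecomplete.of_surjective [IsPrecomplete I M] (f : M →ₗ[R] M')
    (hf : Function.Surjective f) : IsPrecomplete I M' := by
  refine AdicCompletion.of_surjective_iff.mp fun y ↦ ?_
  obtain ⟨x, rfl⟩ := AdicCompletion.map_surjective I hf y
  obtain ⟨m, rfl⟩ := AdicCompletion.of_surjective I M x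
  exact ⟨f m, (AdicCompletion.map_of I f m).symm⟩

theorem Submodule.mkQ_mem_pow_smul_top_iff (N : Submodule R M) (n : ℕ) (a : M) :
    N.mkQ a ∈ (I ^ n • ⊤ : Submodule R (M ⧸ N)) ↔ a ∈ N ⊔ I ^ n • ⊤ := by
  rw [← N.range_mkQ, ← map_top, ← map_smul'', ← mem_comap, comap_map_mkQ]

theorem isHausdorff_quotient_iff (N : Submodule R M) :
    IsHausdorff I (M ⧸ N) ↔ ∀ a : M, (∀ n : ℕ, a ∈ N ⊔ I ^ n • ⊤) → a ∈ N := by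
  simp only [isHausdorff_iff, SModEq.zero, N.mkQ_surjective.forall, ← mkQ_mem_pow_smul_top_iff,
    mkQ_apply, Quotient.mk_eq_zero]

theorem Submodule.mem_smul_top_sup_iff (r : R) (P : Submodule R M) (a : M) :
    a ∈ r • (⊤ : Submodule R M) ⊔ P ↔ ∃ b : M, a - r • b ∈ P := by
  simp only [mem_sup, mem_smul_pointwise_iff_exists, mem_top, true_and]
  constructor
  · rintro ⟨_, ⟨b, rfl⟩, c, hc, rfl⟩
    exact ⟨b, by simpa using hc⟩
  · rintro ⟨b, hb⟩
    exact ⟨_, ⟨b, rfl⟩, _, hb, add_sub_cancel _ _⟩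

theorem IsAdicComplete.mem_smul_top_of_forall_mem_sup [IsAdicComplete I M] {r : R}
    (hr : ∀ n : ℕ, IsSMulRegular (M ⧸ (I ^ n • ⊤ : Submodule R M)) r) {a : M}
    (ha : ∀ n : ℕ, a ∈ r • (⊤ : Submodule R M) ⊔ I ^ n • ⊤) : a ∈ r • (⊤ : Submodule R M) := by
  choose b hb using fun n ↦ (mem_smul_top_sup_iff r _ a).1 (ha n)
  have hcauchy : ∀ {m n : ℕ}, m ≤ n → b m ≡ b n [SMOD (I ^ m • ⊤ : Submodule R M)] := by
    intro m n hmn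
    rw [SModEq.sub_mem]
    refine mem_of_isSMulRegular_quotient_of_smul_mem (hr m) ?_
    rw [smul_sub, show r • b m - r • b n = (a - r • b n) - (a - r • b m) by abel]
    exact sub_mem (smul_mono_left (Ideal.pow_le_pow_right hmn) (hb n)) (hb m)
  obtain ⟨L, hL⟩ := IsPrecomplete.prec inferInstance hcauchy
  have ha_eq : a = r • L := by
    refine (IsHausdorff.eq_iff_smodEq (I := I)).2 fun n ↦ ?_
    rw [SModEq.sub_mem, show a - r • L = (a - r • b n) + r • (b n - L) by rw [smul_sub]; abel]
    exact add_mem (hb n) (smul_mem _ r ((SModEq.sub_mem).1 (hL n)))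
  exact ha_eq ▸ smul_mem_pointwise_smul L r ⊤ mem_top

theorem IsAdicComplete.quotSMulTop [IsAdicComplete I M] {r : R}
    (hr : ∀ n : ℕ, IsSMulRegular (M ⧸ (I ^ n • ⊤ : Submodule R M)) r) :
    IsAdicComplete I (QuotSMulTop r M) where
  toIsHausdorff := (isHausdorff_quotient_iff _).2 fun _ ↦ mem_smul_top_of_forall_mem_sup hr
  toIsPrecomplete := .of_surjective _ (mkQ_surjective _)

end

/-- If `A` is `E`-adically complete and separated (i.e. the natural map
`A → lim_n A/EⁿA` is bijective, which is the content of `IsAdicComplete (span {E}) A`)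
and `p` is a nonzerodivisor on `A/EⁿA` for every `n ≥ 1`, then `A/pA` is `E`-adically
complete and separated, i.e. the natural map `A/pA → lim_n A/(pA + EⁿA)` is bijective
(the content of `IsAdicComplete` for the image ideal of `(E)` in `A/pA`). -/
theorem purity_stmt1 {A : Type*} [CommRing A] (p E : A)
    (hcomplete : IsAdicComplete (Ideal.span {E}) A)
    (hreg : ∀ n : ℕ, 1 ≤ n → ∀ x : A ⧸ (Ideal.span {E} ^ n), p • x = 0 → x = 0) :
    IsAdicComplete (Ideal.span {Ideal.Quotient.mk (Ideal.span {p}) E})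
      (A ⧸ Ideal.span {p}) := by
  have hP : Ideal.span {p} = p • (⊤ : Submodule A A) := by
    rw [← ideal_span_singleton_smul, Ideal.smul_eq_mul, Ideal.mul_top]
  have hregular : ∀ n : ℕ, IsSMulRegular (A ⧸ (Ideal.span {E} ^ n • ⊤ : Submodule A A)) p := by
    intro n
    rw [isSMulRegular_quotient_iff_mem_of_smul_mem]
    rcases Nat.eq_zero_or_pos n with rfl | hn
    · simp
    · intro x hx
      rw [Ideal.smul_eq_mul, Ideal.mul_top] at hx ⊢
      rw [← Ideal.Quotient.eq_zero_iff_mem] at hx ⊢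
      exact hreg n hn _ hx
  rw [← Set.image_singleton, ← Ideal.map_span, ← Ideal.Quotient.algebraMap_eq,
    IsAdicComplete.map_algebraMap_iff, hP]
  exact IsAdicComplete.quotSMulTop hregular
end

section
/- Let A be a commutative ring, p ∈ A, and let f : M → N be an A-linear map of A-modules. Assume that p is a nonzerodivisor on M and on N, and that the induced map M/pM → N/pN is injective. Then for every n ≥ 1 the induced map M/p^n M → N/p^n N is injective. -/
/-!
If `f x = pⁿ⁺¹ w`, injectivity modulo `p` gives `x = p y`; then `p f y = p pⁿ w`, and since `p`
is a nonzerodivisor on `N`, `f y = pⁿ w`, so induction on `n` gives `y ∈ pⁿ M`, i.e. `x ∈ pⁿ⁺¹ M`.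
-/

/-- A linear map always carries `pM` into `pN`, so it induces maps on the quotients. -/
theorem smul_top_le_comap {A M N : Type*} [CommRing A] [AddCommGroup M] [Module A M]
    [AddCommGroup N] [Module A N] (I : Ideal A) (f : M →ₗ[A] N) :
    (I • ⊤ : Submodule A M) ≤ Submodule.comap f (I • ⊤ : Submodule A N) := by
  rw [← Submodule.map_le_iff_le_comap, Submodule.map_smul'']
  exact Submodule.smul_mono le_rfl le_top

open Pointwise

theorem Submodule.mapQ_injective_iff_comap_le {R M N : Type*} [Ring R] [AddCommGroup M]
    [Module R M] [AddCommGroup N] [Module R N] {P : Submodule R M} {Q : Submodule R N}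
    (f : M →ₗ[R] N) (h : P ≤ Q.comap f) :
    Function.Injective (P.mapQ Q f h) ↔ Q.comap f ≤ P := by
  rw [← LinearMap.ker_eq_bot, ker_mapQ, eq_bot_iff, map_le_iff_le_comap, comap_bot, ker_mkQ]

section

variable {R M N : Type*} [CommSemiring R] [AddCommMonoid M] [Module R M] [AddCommMonoid N]
  [Module R N]

theorem Submodule.mem_pointwise_smul_top_iff {r : R} {x : M} :
    x ∈ (r • ⊤ : Submodule R M) ↔ ∃ y, r • y = x := by
  simp [mem_smul_pointwise_iff_exists]

theorem Submodule.comap_pow_smul_top_le {p : R} (f : M →ₗ[R] N) (hN : IsSMulRegular N p)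
    (h : (p • ⊤ : Submodule R N).comap f ≤ p • ⊤) (n : ℕ) :
    (p ^ n • ⊤ : Submodule R N).comap f ≤ p ^ n • ⊤ := by
  induction n with
  | zero => simp
  | succ n ih =>
    intro x hx
    obtain ⟨w, hw⟩ := mem_pointwise_smul_top_iff.mp hx
    have hfx : f x ∈ (p • ⊤ : Submodule R N) :=
      mem_pointwise_smul_top_iff.mpr ⟨p ^ n • w, by rw [smul_smul, ← pow_succ', hw]⟩
    obtain ⟨y, rfl⟩ := mem_pointwise_smul_top_iff.mp (h hfx)
    have hfy : p ^ n • w = f y :=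
      hN (show p • p ^ n • w = p • f y by rw [← map_smul, ← hw, smul_smul, pow_succ'])
    obtain ⟨z, rfl⟩ := mem_pointwise_smul_top_iff.mp (ih (mem_pointwise_smul_top_iff.mpr ⟨w, hfy⟩))
    exact mem_pointwise_smul_top_iff.mpr ⟨z, by rw [pow_succ', mul_smul]⟩

end

theorem purity_stmt2_general {A M N : Type*} [CommRing A] [AddCommGroup M] [Module A M]
    [AddCommGroup N] [Module A N] (p : A) (f : M →ₗ[A] N)
    (hN : ∀ y : N, p • y = 0 → y = 0)
    (hinj : Function.Injective
      (Submodule.mapQ (Ideal.span {p} • ⊤) (Ideal.span {p} • ⊤) f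
        (smul_top_le_comap (Ideal.span {p}) f))) :
    ∀ n : ℕ, 1 ≤ n →
      Function.Injective
        (Submodule.mapQ (Ideal.span {p ^ n} • ⊤) (Ideal.span {p ^ n} • ⊤) f
          (smul_top_le_comap (Ideal.span {p ^ n}) f)) := by
  intro n _
  rw [Submodule.mapQ_injective_iff_comap_le] at hinj ⊢
  simp only [Submodule.ideal_span_singleton_smul] at hinj ⊢
  exact Submodule.comap_pow_smul_top_le f (isSMulRegular_iff_right_eq_zero_of_smul.mpr hN) hinj n

/-- If `p` is a nonzerodivisor on `M` and on `N` and the induced map `M/pM → N/pN`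
is injective, then for every `n ≥ 1` the induced map `M/pⁿM → N/pⁿN` is injective. -/
theorem purity_stmt2 {A M N : Type*} [CommRing A] [AddCommGroup M] [Module A M]
    [AddCommGroup N] [Module A N] (p : A) (f : M →ₗ[A] N)
    (hM : ∀ x : M, p • x = 0 → x = 0) (hN : ∀ y : N, p • y = 0 → y = 0)
    (hinj : Function.Injective
      (Submodule.mapQ (Ideal.span {p} • ⊤) (Ideal.span {p} • ⊤) f
        (smul_top_le_comap (Ideal.span {p}) f))) :
    ∀ n : ℕ, 1 ≤ n →
      Function.Injective
        (Submodule.mapQ (Ideal.span {p ^ n} • ⊤) (Ideal.span {p ^ n} • ⊤) f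
          (smul_top_le_comap (Ideal.span {p ^ n}) f)) :=
  purity_stmt2_general p f hN hinj
end

section
/- Let D be a commutative ring, let B and C be subrings of D, and set A = B ∩ C, a subring of D. Let M be a finitely generated projective A-module. Then all the base-change maps X ⊗_A M → D ⊗_A M for a subring X of D containing A are injective, and inside D ⊗_A M the intersection of the image of B ⊗_A M and the image of C ⊗_A M equals the image of M = A ⊗_A M. -/
/-!
Projective modules are flat, and base change along a flat module `M` preserves finite
intersections of submodules: `N₁ ⊓ N₂` is the kernel of `P → P ⧸ N₁ × P ⧸ N₂`, so by flatness
`(N₁ ⊓ N₂) ⊗ M` is the kernel of `P ⊗ M → (P ⧸ N₁) ⊗ M × (P ⧸ N₂) ⊗ M`, while by right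
exactness the kernel of `P ⊗ M → (P ⧸ Nᵢ) ⊗ M` is the image of `Nᵢ ⊗ M`. As `A`-submodules
of `D`, `B ⊓ C` is the image of `A`, whose base change is the image of `M`.
-/

open TensorProduct LinearMap

/-- A subring `X` of `D` containing a subring `A`, viewed as an `A`-subalgebra of `D`. -/
def Subring.toSubalgebraOfLe {D : Type*} [CommRing D] {A X : Subring D} (h : A ≤ X) :
    Subalgebra ↥A D :=
  { X with algebraMap_mem' := fun a => h a.2 }

section

variable {R : Type*} [CommRing R] (M : Type*) [AddCommGroup M] [Module R M]
  {N P Q : Type*} [AddCommGroup N] [Module R N] [AddCommGroup P] [Module R P]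
  [AddCommGroup Q] [Module R Q]

theorem LinearMap.ker_rTensor_prod (f : N →ₗ[R] P) (g : N →ₗ[R] Q) :
    ker ((f.prod g).rTensor M) = ker (f.rTensor M) ⊓ ker (g.rTensor M) := by
  have : (prodLeft R R P Q M).toLinearMap ∘ₗ (f.prod g).rTensor M =
      (f.rTensor M).prod (g.rTensor M) := by
    apply TensorProduct.ext'
    intro n m
    simp
  rw [← ker_prod, ← this, ker_comp, LinearEquiv.ker, Submodule.comap_bot]

theorem LinearMap.range_rTensor_subtype_range (f : N →ₗ[R] P) :
    range ((range f).subtype.rTensor M) = range (f.rTensor M) := by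
  calc range ((range f).subtype.rTensor M)
      = range (((range f).subtype ∘ₗ f.rangeRestrict).rTensor M) := by
        rw [rTensor_comp, range_comp_of_range_eq_top _
          (range_eq_top.mpr (rTensor_surjective M f.surjective_rangeRestrict))]
    _ = range (f.rTensor M) := rfl

theorem Submodule.range_rTensor_subtype_inf [Module.Flat R M] (N₁ N₂ : Submodule R N) :
    range (N₁.subtype.rTensor M) ⊓ range (N₂.subtype.rTensor M) =
      range ((N₁ ⊓ N₂).subtype.rTensor M) := by
  have hker : ker (N₁.mkQ.prod N₂.mkQ) = N₁ ⊓ N₂ := by rw [ker_prod, ker_mkQ, ker_mkQ]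
  have hexact : ∀ N' : Submodule R N,
      range (N'.subtype.rTensor M) = ker (N'.mkQ.rTensor M) := fun N' =>
    (exact_iff.mp (rTensor_exact M (exact_subtype_mkQ N') N'.mkQ_surjective)).symm
  rw [hexact, hexact, ← ker_rTensor_prod, ← hker]
  exact exact_iff.mp (Module.Flat.rTensor_exact M (exact_subtype_ker_map (N₁.mkQ.prod N₂.mkQ)))

end

theorem LinearMap.range_rTensor_algebraLinearMap {R S : Type*} [CommRing R] [CommRing S]
    [Algebra R S] (M : Type*) [AddCommGroup M] [Module R M] :
    range ((Algebra.linearMap R S).rTensor M) = range (TensorProduct.mk R S M 1) := by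
  have : (Algebra.linearMap R S).rTensor M ∘ₗ (TensorProduct.lid R M).symm.toLinearMap =
      TensorProduct.mk R S M 1 := by
    ext m; simp
  rw [← this, range_comp_of_range_eq_top _ (LinearEquiv.range _)]

theorem Subring.toSubalgebraOfLe_inf_toSubalgebraOfLe {D : Type*} [CommRing D]
    (B C : Subring D) :
    toSubalgebraOfLe (inf_le_left : B ⊓ C ≤ B) ⊓ toSubalgebraOfLe (inf_le_right : B ⊓ C ≤ C) =
      ⊥ := by
  ext x
  rw [Algebra.mem_inf, Algebra.mem_bot]
  exact ⟨fun hx => ⟨⟨x, hx⟩, rfl⟩, by rintro ⟨a, rfl⟩; exact a.2⟩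

set_option synthInstance.maxHeartbeats 1000000 in
set_option maxHeartbeats 2000000 in
theorem purity_stmt4_general {D : Type*} [CommRing D] (B C : Subring D)
    (M : Type*) [AddCommGroup M] [Module ↥(B ⊓ C) M]
    [Module.Projective ↥(B ⊓ C) M] :
    (∀ X : Subalgebra ↥(B ⊓ C) D,
        Function.Injective (LinearMap.rTensor M X.val.toLinearMap)) ∧
      LinearMap.range
          (LinearMap.rTensor M
            (Subring.toSubalgebraOfLe (inf_le_left : B ⊓ C ≤ B)).val.toLinearMap) ⊓
        LinearMap.range
          (LinearMap.rTensor M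
            (Subring.toSubalgebraOfLe (inf_le_right : B ⊓ C ≤ C)).val.toLinearMap) =
      LinearMap.range (TensorProduct.mk ↥(B ⊓ C) D M 1) := by
  refine ⟨fun X => Module.Flat.rTensor_preserves_injective_linearMap _ Subtype.val_injective, ?_⟩
  change range ((Subalgebra.toSubmodule _).subtype.rTensor M) ⊓
    range ((Subalgebra.toSubmodule _).subtype.rTensor M) = _
  rw [Submodule.range_rTensor_subtype_inf, ← Algebra.inf_toSubmodule,
    Subring.toSubalgebraOfLe_inf_toSubalgebraOfLe, Algebra.toSubmodule_bot,
    Submodule.one_eq_range, range_rTensor_subtype_range, range_rTensor_algebraLinearMap]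

set_option synthInstance.maxHeartbeats 1000000 in
set_option maxHeartbeats 2000000 in
/-- Let `B, C` be subrings of `D` and `A = B ∩ C`. If `M` is a finitely generated
projective `A`-module, then all base-change maps `X ⊗[A] M → D ⊗[A] M`, for `X` a
subring of `D` containing `A` (i.e. an `A`-subalgebra of `D`), are injective, and
inside `D ⊗[A] M` the intersection of the images of `B ⊗[A] M` and of `C ⊗[A] M`
equals the image of `M = A ⊗[A] M` (embedded via `x ↦ 1 ⊗ x`). -/
theorem purity_stmt4 {D : Type*} [CommRing D] (B C : Subring D)
    (M : Type*) [AddCommGroup M] [Module ↥(B ⊓ C) M]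
    [Module.Finite ↥(B ⊓ C) M] [Module.Projective ↥(B ⊓ C) M] :
    (∀ X : Subalgebra ↥(B ⊓ C) D,
        Function.Injective (LinearMap.rTensor M X.val.toLinearMap)) ∧
      LinearMap.range
          (LinearMap.rTensor M
            (Subring.toSubalgebraOfLe (inf_le_left : B ⊓ C ≤ B)).val.toLinearMap) ⊓
        LinearMap.range
          (LinearMap.rTensor M
            (Subring.toSubalgebraOfLe (inf_le_right : B ⊓ C ≤ C)).val.toLinearMap) =
      LinearMap.range (TensorProduct.mk ↥(B ⊓ C) D M 1) :=
  purity_stmt4_general B C M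
end

section
/- Let D be a commutative ring and p ∈ D a nonzerodivisor such that D is p-adically separated, i.e., ∩_n p^n D = 0. Let B and C be subrings of D, and let A be a subring of B ∩ C with p ∈ A. Assume: (i) A is p-adically complete and separated, i.e., the natural map A → lim_n A/p^n A is bijective; (ii) B ∩ pD = pB and C ∩ pD = pC; (iii) for every x ∈ B ∩ C there exists a ∈ A with x − a ∈ pD. Then A = B ∩ C. -/
/-!
Write `π` for `p` viewed in `A`. Condition (ii) and regularity of `p` turn (iii) into
`B ⊓ C ⊆ A + p (B ⊓ C)`. Iterating, every `x ∈ B ⊓ C` satisfies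
`x = ∑_{i<n} pⁱ aᵢ + pⁿ yₙ` with `aᵢ ∈ A`, `yₙ ∈ B ⊓ C`. The series `∑ πⁱ aᵢ` converges in the
precomplete ring `A` to some `L`, so `x - L ∈ pⁿD` for every `n`, and `x = L ∈ A` because `D`
is `p`-adically separated.
-/

open Pointwise Finset

theorem IsPrecomplete.exists_sub_sum_pow_mul_mem {R : Type*} [CommRing R] {π : R}
    (h : IsPrecomplete (Ideal.span {π}) R) (a : ℕ → R) :
    ∃ L : R, ∀ n, L - ∑ i ∈ range n, π ^ i * a i ∈ Ideal.span {π ^ n} := by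
  have hcauchy : AdicCompletion.IsAdicCauchy (Ideal.span {π}) R
      fun n ↦ ∑ i ∈ range n, π ^ i * a i := by
    rw [AdicCompletion.isAdicCauchy_iff]
    refine fun n ↦ SModEq.sub_mem.2 ?_
    rw [smul_eq_mul, Ideal.mul_top, Ideal.span_singleton_pow, sum_range_succ, sub_add_cancel_left]
    exact neg_mem (Ideal.mul_mem_right _ _ (Ideal.mem_span_singleton_self _))
  obtain ⟨L, hL⟩ := h.prec hcauchy
  refine ⟨L, fun n ↦ ?_⟩
  simpa [SModEq.sub_mem, Ideal.span_singleton_pow] using (hL n).symm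

theorem exists_forall_eq_sum_pow_mul_add {R : Type*} [CommRing R] {p : R} {A S : Set R}
    (hS : ∀ x ∈ S, ∃ a ∈ A, ∃ y ∈ S, x = a + p * y) {x : R} (hx : x ∈ S) :
    ∃ a : ℕ → R, (∀ n, a n ∈ A) ∧
      ∀ n, ∃ y ∈ S, x = ∑ i ∈ range n, p ^ i * a i + p ^ n * y := by
  choose! f hfA g hgS hfg using hS
  have hiter : ∀ n, g^[n] x ∈ S := fun n ↦ by
    induction n with
    | zero => exact hx
    | succ n ih => rw [Function.iterate_succ_apply']; exact hgS _ ih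
  refine ⟨fun n ↦ f (g^[n] x), fun n ↦ hfA _ (hiter n), fun n ↦ ⟨g^[n] x, hiter n, ?_⟩⟩
  induction n with
  | zero => simp
  | succ n ih =>
    rw [sum_range_succ, Function.iterate_succ_apply']
    linear_combination ih + p ^ n * hfg _ (hiter n)

theorem Subring.exists_mem_inf_eq_mul {D : Type*} [CommRing D] {p : D} (hp : IsLeftRegular p)
    {B C : Subring D} (hB : (B : Set D) ∩ p • (Set.univ : Set D) = p • (B : Set D))
    (hC : (C : Set D) ∩ p • (Set.univ : Set D) = p • (C : Set D))
    {z : D} (hzB : z ∈ B) (hzC : z ∈ C) (hz : z ∈ p • (Set.univ : Set D)) :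
    ∃ y ∈ B ⊓ C, z = p * y := by
  obtain ⟨b, hbB, rfl⟩ : z ∈ p • (B : Set D) := hB ▸ ⟨hzB, hz⟩
  obtain ⟨c, hcC, hcb⟩ : p • b ∈ p • (C : Set D) := hC ▸ ⟨hzC, hz⟩
  exact ⟨b, ⟨hbB, hp hcb ▸ hcC⟩, rfl⟩

theorem Subring.subset_of_subset_add_mul {D : Type*} [CommRing D] {p : D}
    (hsep : (⨅ n : ℕ, Ideal.span {p} ^ n) = (⊥ : Ideal D)) (A : Subring D) (hpA : p ∈ A)
    (hA : IsPrecomplete (Ideal.span {(⟨p, hpA⟩ : A)}) A) {S : Set D}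
    (hS : ∀ x ∈ S, ∃ a ∈ A, ∃ y ∈ S, x = a + p * y) : S ⊆ A := by
  intro x hx
  obtain ⟨a, haA, hxa⟩ := exists_forall_eq_sum_pow_mul_add hS hx
  obtain ⟨L, hL⟩ := hA.exists_sub_sum_pow_mul_mem fun n ↦ ⟨a n, haA n⟩
  suffices x = L from this ▸ L.2
  rw [← sub_eq_zero, ← Ideal.mem_bot, ← hsep, Submodule.mem_iInf]
  intro n
  obtain ⟨y, -, hy⟩ := hxa n
  obtain ⟨c, hc⟩ := Ideal.mem_span_singleton'.1 (hL n)
  have hxL : x - L = p ^ n * (y - c) := by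
    have := congrArg ((↑) : A → D) hc
    push_cast at this
    linear_combination hy + this
  rw [Ideal.span_singleton_pow, hxL]
  exact Ideal.mul_mem_right _ _ (Ideal.mem_span_singleton_self _)

/-- Let `D` be a commutative ring and `p ∈ D` a nonzerodivisor such that `D` is
`p`-adically separated (`⋂ₙ pⁿD = 0`). Let `B, C` be subrings of `D` and `A` a subring
of `B ∩ C` with `p ∈ A`. If (i) `A` is `p`-adically complete and separated, (ii)
`B ∩ pD = pB` and `C ∩ pD = pC`, and (iii) every `x ∈ B ∩ C` is congruent mod `pD`
to an element of `A`, then `A = B ∩ C`. -/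
theorem purity_stmt5 {D : Type*} [CommRing D] (p : D)
    (hreg : ∀ x : D, p * x = 0 → x = 0)
    (hsep : (⨅ n : ℕ, Ideal.span {p} ^ n) = (⊥ : Ideal D))
    (B C A : Subring D) (hA : A ≤ B ⊓ C) (hpA : p ∈ A)
    (hcomplete : IsAdicComplete (Ideal.span {(⟨p, hpA⟩ : ↥A)}) ↥A)
    (hB : (B : Set D) ∩ p • (Set.univ : Set D) = p • (B : Set D))
    (hC : (C : Set D) ∩ p • (Set.univ : Set D) = p • (C : Set D))
    (happrox : ∀ x ∈ B ⊓ C, ∃ a ∈ A, x - a ∈ p • (Set.univ : Set D)) :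
    A = B ⊓ C := by
  refine le_antisymm hA (Subring.subset_of_subset_add_mul hsep A hpA
    hcomplete.toIsPrecomplete fun x hx ↦ ?_)
  obtain ⟨a, haA, hxa⟩ := happrox x hx
  obtain ⟨y, hy, hxy⟩ := Subring.exists_mem_inf_eq_mul
    (isLeftRegular_iff_right_eq_zero_of_mul.2 hreg) hB hC
    (sub_mem hx.1 (hA haA).1) (sub_mem hx.2 (hA haA).2) hxa
  exact ⟨a, haA, y, hy, by rw [← hxy, add_sub_cancel]⟩
end
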